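/- arXiv:0705.3912 — 2 statements merged into one kernel-verified Lean document; each statement's English description precedes it below -/
import Mathlib

section
/- Let R = ℂ⟦x,y⟧ with maximal ideal m = ⟨x,y⟩. There is no ideal I of R generated by two elements with m³ ⊆ I ⊆ m² and dim_ℂ(R/I) = 5. -/
/-- The formal power series ring `R = ℂ⟦x,y⟧`. -/
noncomputable abbrev R2 : Type := MvPowerSeries (Fin 2) ℂ

/-- The variable `x`. -/
noncomputable def Xv : R2 := MvPowerSeries.X 0

/-- The variable `y`. -/
noncomputable def Yv : R2 := MvPowerSeries.X 1

/-- The maximal ideal `m = ⟨x, y⟩` of `R = ℂ⟦x,y⟧`. -/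
noncomputable def mIdeal : Ideal R2 := Ideal.span {Xv, Yv}

/-!
Since `m * m² ⊆ m³`, modulo `m³` the ideal `I = (g, h)` is just the `ℂ`-span of `g` and `h`;
as `dim R/m³ = 6`, the condition `dim R/I = 5` makes `I/m³` a line, so after changing
generators `g ∉ m³` and `h ∈ m³`. A combination `a * g + b * h` then lies in `m³` only if
`a ∈ m`, so modulo `m⁴` the space `m³ ⊆ I` is spanned by `x * g`, `y * g` and `h`.
But `m³/m⁴` has dimension 4.
-/

open Submodule

universe u in
theorem rank_quotient_eq_rank_quotient_map {K : Type*} {M N : Type u} [Ring K]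
    [AddCommGroup M] [Module K M] [AddCommGroup N] [Module K N] {f : M →ₗ[K] N}
    (hf : Function.Surjective f)
    {p : Submodule K M} (hp : LinearMap.ker f ≤ p) :
    Module.rank K (M ⧸ p) = Module.rank K (N ⧸ p.map f) := by
  have hker : LinearMap.ker ((p.map f).mkQ ∘ₗ f) = p := by
    rw [LinearMap.ker_comp, ker_mkQ, comap_map_eq, sup_eq_left.mpr hp]
  exact ((quotEquivOfEq _ _ hker.symm).trans
    (((p.map f).mkQ ∘ₗ f).quotKerEquivOfSurjective ((p.map f).mkQ_surjective.comp hf))).rank_eq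

theorem exists_eq_smul_of_finrank_span_pair_eq_one {K V : Type*} [DivisionRing K] [AddCommGroup V]
    [Module K V] {u v : V} (h : Module.finrank K (span K {u, v}) = 1) (hu : u ≠ 0) :
    ∃ c : K, v = c • u := by
  have : FiniteDimensional K (span K {u, v}) := Module.finite_of_finrank_eq_succ h
  have hspan : span K {u} = span K {u, v} :=
    eq_of_le_of_finrank_eq (span_mono (by simp)) ((finrank_span_singleton hu).trans h.symm)
  obtain ⟨c, hc⟩ := mem_span_singleton.mp (hspan ▸ subset_span (by simp) : v ∈ span K {u})
  exact ⟨c, hc.symm⟩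

section ResidueField

variable {k A : Type*} [Field k] [CommRing A] [Algebra k A] {m : Ideal A}

theorem mul_mem_span_sup_pow_succ (hm : ∀ a : A, ∃ c : k, a - algebraMap k A c ∈ m)
    {n : ℕ} {s : Set A} {g : A} (hgs : g ∈ s) (hg : g ∈ m ^ n) (a : A) :
    a * g ∈ span k s ⊔ (m ^ (n + 1)).restrictScalars k := by
  obtain ⟨c, hc⟩ := hm a
  have hsplit : a * g = c • g + (a - algebraMap k A c) * g := by rw [Algebra.smul_def]; ring
  rw [hsplit]
  exact add_mem_sup (smul_mem _ c (subset_span hgs))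
    (pow_succ' m n ▸ Ideal.mul_mem_mul hc hg)

theorem restrictScalars_span_pair_le (hm : ∀ a : A, ∃ c : k, a - algebraMap k A c ∈ m)
    {n : ℕ} {g h : A} (hg : g ∈ m ^ n) (hh : h ∈ m ^ n) :
    (Ideal.span {g, h}).restrictScalars k ≤
      span k {g, h} ⊔ (m ^ (n + 1)).restrictScalars k := by
  intro f hf
  obtain ⟨a, b, rfl⟩ := Ideal.mem_span_pair.mp hf
  refine add_mem ?_ ?_
  · exact mul_mem_span_sup_pow_succ hm (by simp) hg a
  · exact mul_mem_span_sup_pow_succ hm (by simp) hh b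

theorem restrictScalars_pow_succ_le_span_sup (hm : ∀ a : A, ∃ c : k, a - algebraMap k A c ∈ m)
    {x y g h : A} (hxy : m = Ideal.span {x, y}) {n : ℕ} (hg : g ∈ m ^ n)
    (hg' : g ∉ m ^ (n + 1)) (hh : h ∈ m ^ (n + 1)) (hI : m ^ (n + 1) ≤ Ideal.span {g, h}) :
    (m ^ (n + 1)).restrictScalars k ≤
      span k {x * g, y * g, h} ⊔ (m ^ (n + 1 + 1)).restrictScalars k := by
  intro v hv
  obtain ⟨a, b, rfl⟩ := Ideal.mem_span_pair.mp (hI hv)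
  -- a nonzero constant term `c` of `a` would give `c • g ∈ m ^ (n + 1)`
  have ha : a ∈ m := by
    obtain ⟨c, hc⟩ := hm a
    have hcg : c • g ∈ m ^ (n + 1) := by
      have : c • g = a * g + b * h - (a - algebraMap k A c) * g - b * h := by
        rw [Algebra.smul_def]; ring
      rw [this]
      exact sub_mem (sub_mem hv (pow_succ' m n ▸ Ideal.mul_mem_mul hc hg))
        (Ideal.mul_mem_left _ b hh)
    obtain rfl : c = 0 := by
      by_contra hc0
      exact hg' (by
        simpa [smul_smul, inv_mul_cancel₀ hc0] using smul_of_tower_mem _ c⁻¹ hcg)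
    simpa using hc
  rw [hxy] at ha
  obtain ⟨a₁, a₂, rfl⟩ := Ideal.mem_span_pair.mp ha
  have hmul : ∀ z ∈ m, z * g ∈ m ^ (n + 1) := fun z hz =>
    pow_succ' m n ▸ Ideal.mul_mem_mul hz hg
  have hx : x * g ∈ m ^ (n + 1) := hmul x (hxy ▸ Ideal.subset_span (by simp))
  have hy : y * g ∈ m ^ (n + 1) := hmul y (hxy ▸ Ideal.subset_span (by simp))
  rw [show (a₁ * x + a₂ * y) * g + b * h = a₁ * (x * g) + a₂ * (y * g) + b * h by ring]
  refine add_mem (add_mem ?_ ?_) ?_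
  · exact mul_mem_span_sup_pow_succ hm (by simp) hx a₁
  · exact mul_mem_span_sup_pow_succ hm (by simp) hy a₂
  · exact mul_mem_span_sup_pow_succ hm (by simp) hh b

end ResidueField

open MvPowerSeries Finsupp

theorem le_order_of_mem_mIdeal_pow {n : ℕ} {f : R2} (hf : f ∈ mIdeal ^ n) :
    (n : ℕ∞) ≤ f.order := by
  induction n generalizing f with
  | zero => simp
  | succ n ih =>
    rw [pow_succ'] at hf
    refine Submodule.mul_induction_on hf (fun r hr s hs => ?_) (fun u v hu hv => ?_)
    · have hr1 : 1 ≤ r.order := by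
        have hker : mIdeal ≤ RingHom.ker (constantCoeff (σ := Fin 2) (R := ℂ)) := by
          rw [mIdeal, Ideal.span_le]
          rintro _ (rfl | rfl) <;> simp [Xv, Yv]
        exact one_le_order_iff_constCoeff_eq_zero.mpr (hker hr)
      calc ((n + 1 : ℕ) : ℕ∞) = 1 + n := by push_cast; ring
        _ ≤ r.order + s.order := add_le_add hr1 (ih hs)
        _ ≤ (r * s).order := le_order_mul
    · exact (le_min hu hv).trans min_order_le_add

/-- In `f = x * a + y * b`, the summand `x * a` collects the terms of `f` divisible by `x` and
`y * b` the remaining ones, which are powers of `y`. -/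
theorem exists_eq_X_mul_add_Y_mul {n : ℕ} {f : R2} (hf : ((n + 1 : ℕ) : ℕ∞) ≤ f.order) :
    ∃ a b : R2, f = Xv * a + Yv * b ∧ (n : ℕ∞) ≤ a.order ∧ (n : ℕ∞) ≤ b.order := by
  have hf0 : ∀ d : Fin 2 →₀ ℕ, degree d < n + 1 → coeff d f = 0 := fun d hd =>
    coeff_of_lt_order (lt_of_lt_of_le (by exact_mod_cast hd) hf)
  let a : R2 := fun d => coeff (d + single 0 1) f
  let b : R2 := fun d => if d 0 = 0 then coeff (d + single 1 1) f else 0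
  have ha : ∀ d, coeff d a = coeff (d + single 0 1) f := fun d => rfl
  have hb : ∀ d, coeff d b = if d 0 = 0 then coeff (d + single 1 1) f else 0 := fun d => rfl
  refine ⟨a, b, ?_, nat_le_order fun d hd => ?_, nat_le_order fun d hd => ?_⟩
  · ext d
    rw [map_add, Xv, Yv, X_def, X_def, coeff_monomial_mul, coeff_monomial_mul, ha, hb]
    have hsub : ∀ i : Fin 2, 1 ≤ d i → d - single i 1 + single i 1 = d := fun i hi =>
      tsub_add_cancel_of_le (single_le_iff.mpr hi)
    rcases Nat.eq_zero_or_pos (d 0) with h₀ | h₀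
    · rcases Nat.eq_zero_or_pos (d 1) with h₁ | h₁
      · obtain rfl : d = 0 := by ext i; fin_cases i <;> assumption
        simp [hf0 0 (by simp)]
      · simp [single_le_iff, h₀, h₁.ne', hsub 1 h₁]
    · simp [single_le_iff, h₀.ne', hsub 0 h₀]
  · exact hf0 _ (by simpa using hd)
  · rw [hb]
    split_ifs
    · exact hf0 _ (by simpa using hd)
    · rfl

theorem mem_mIdeal_pow_iff {n : ℕ} {f : R2} : f ∈ mIdeal ^ n ↔ (n : ℕ∞) ≤ f.order := by
  refine ⟨le_order_of_mem_mIdeal_pow, fun hf => ?_⟩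
  induction n generalizing f with
  | zero => simp
  | succ n ih =>
    obtain ⟨a, b, rfl, ha, hb⟩ := exists_eq_X_mul_add_Y_mul hf
    have hX : Xv ∈ mIdeal := Ideal.subset_span (by simp)
    have hY : Yv ∈ mIdeal := Ideal.subset_span (by simp)
    rw [pow_succ']
    exact add_mem (Ideal.mul_mem_mul hX (ih ha)) (Ideal.mul_mem_mul hY (ih hb))

theorem exists_sub_algebraMap_mem_mIdeal (f : R2) :
    ∃ c : ℂ, f - algebraMap ℂ R2 c ∈ mIdeal := by
  refine ⟨constantCoeff f, ?_⟩
  rw [← pow_one mIdeal, mem_mIdeal_pow_iff, Nat.cast_one, one_le_order_iff_constCoeff_eq_zero]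
  simp [MvPowerSeries.algebraMap_apply]

noncomputable def exponent (pq : ℕ × ℕ) : Fin 2 →₀ ℕ := single 0 pq.1 + single 1 pq.2

theorem degree_exponent (pq : ℕ × ℕ) : degree (exponent pq) = pq.1 + pq.2 := by
  simp [exponent]

theorem exponent_injective : Function.Injective exponent := by
  intro pq pq' h
  have h₀ := DFunLike.congr_fun h 0
  have h₁ := DFunLike.congr_fun h 1
  simp [exponent] at h₀ h₁
  exact Prod.ext h₀ h₁

theorem exponent_apply_zero_apply_one (d : Fin 2 →₀ ℕ) : exponent (d 0, d 1) = d := by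
  ext i; fin_cases i <;> simp [exponent]

noncomputable def coeffsOn (S : Finset (ℕ × ℕ)) : R2 →ₗ[ℂ] (S → ℂ) :=
  LinearMap.pi fun pq => coeff (exponent pq)

theorem coeffsOn_sum_monomial (S : Finset (ℕ × ℕ)) (w : S → ℂ) :
    coeffsOn S (∑ pq : S, monomial (exponent pq) (w pq)) = w := by
  classical
  ext pq
  simp [coeffsOn, coeff_monomial, exponent_injective.eq_iff]

theorem coeffsOn_surjective (S : Finset (ℕ × ℕ)) : Function.Surjective (coeffsOn S) :=
  fun w => ⟨_, coeffsOn_sum_monomial S w⟩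

theorem coeffsOn_eq_zero_of_mem {S : Finset (ℕ × ℕ)} {n : ℕ}
    (hS : ∀ pq ∈ S, pq.1 + pq.2 < n) {f : R2} (hf : f ∈ mIdeal ^ n) : coeffsOn S f = 0 := by
  ext pq
  refine coeff_of_lt_order (lt_of_lt_of_le ?_ (mem_mIdeal_pow_iff.mp hf))
  exact_mod_cast (degree_exponent pq).trans_lt (hS pq pq.2)

theorem mem_of_coeffsOn_eq_zero {S : Finset (ℕ × ℕ)} {n : ℕ}
    (hS : ∀ pq : ℕ × ℕ, pq.1 + pq.2 < n → pq ∈ S) {f : R2} (hf : coeffsOn S f = 0) :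
    f ∈ mIdeal ^ n := by
  refine mem_mIdeal_pow_iff.mpr (nat_le_order fun d hd => ?_)
  have hdeg := degree_exponent (d 0, d 1)
  rw [exponent_apply_zero_apply_one] at hdeg
  have hdS : (d 0, d 1) ∈ S := hS _ (by simp only at hdeg ⊢; omega)
  simpa [coeffsOn, exponent_apply_zero_apply_one] using congrFun hf ⟨_, hdS⟩

def belowDegree (n : ℕ) : Finset (ℕ × ℕ) :=
  (Finset.range n ×ˢ Finset.range n).filter fun pq => pq.1 + pq.2 < n

theorem mem_belowDegree {n : ℕ} {pq : ℕ × ℕ} : pq ∈ belowDegree n ↔ pq.1 + pq.2 < n := by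
  simp only [belowDegree, Finset.mem_filter, Finset.mem_product, Finset.mem_range]
  omega

theorem ker_coeffsOn_belowDegree (n : ℕ) :
    LinearMap.ker (coeffsOn (belowDegree n)) = (mIdeal ^ n).restrictScalars ℂ := by
  ext f
  exact ⟨mem_of_coeffsOn_eq_zero fun _ => mem_belowDegree.mpr,
    coeffsOn_eq_zero_of_mem fun _ => mem_belowDegree.mp⟩

theorem not_restrictScalars_pow_le_span_sup {n : ℕ} (s : Finset R2) (hs : s.card ≤ n) :
    ¬ (mIdeal ^ n).restrictScalars ℂ ≤
      span ℂ s ⊔ (mIdeal ^ (n + 1)).restrictScalars ℂ := by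
  intro hle
  set ψ := coeffsOn (Finset.HasAntidiagonal.antidiagonal n)
  have htop : ((mIdeal ^ n).restrictScalars ℂ).map ψ = ⊤ := by
    refine eq_top_iff.mpr fun w _ => ⟨_, sum_mem fun pq _ => ?_, coeffsOn_sum_monomial _ w⟩
    rw [restrictScalars_mem, mem_mIdeal_pow_iff, order_monomial]
    split_ifs
    · exact le_top
    · rw [degree_exponent, Finset.HasAntidiagonal.mem_antidiagonal.mp pq.2]
  have hbot : ((mIdeal ^ (n + 1)).restrictScalars ℂ).map ψ = ⊥ :=
    LinearMap.le_ker_iff_map.mp fun f hf => coeffsOn_eq_zero_of_mem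
      (fun pq hpq => by rw [Finset.HasAntidiagonal.mem_antidiagonal.mp hpq]; omega) hf
  have hspan := map_mono (f := ψ) hle
  rw [htop, Submodule.map_sup, hbot, sup_bot_eq, map_span, ← Finset.coe_image] at hspan
  have := (Submodule.finrank_mono hspan).trans
    ((finrank_span_finset_le_card _).trans (Finset.card_image_le.trans hs))
  simp at this

theorem finrank_span_coeffsOn_pair_eq_one {g h : R2} (h3 : mIdeal ^ 3 ≤ Ideal.span {g, h})
    (h2 : Ideal.span {g, h} ≤ mIdeal ^ 2)
    (hrank : Module.rank ℂ (R2 ⧸ Ideal.span {g, h}) = 5) :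
    Module.finrank ℂ (span ℂ {coeffsOn (belowDegree 3) g, coeffsOn (belowDegree 3) h}) = 1 := by
  set φ := coeffsOn (belowDegree 3)
  set I := Ideal.span {g, h}
  have hmap : (I.restrictScalars ℂ).map φ = span ℂ {φ g, φ h} := by
    refine le_antisymm ?_ (span_le.mpr ?_)
    · calc (I.restrictScalars ℂ).map φ
          ≤ (span ℂ {g, h} ⊔ (mIdeal ^ 3).restrictScalars ℂ).map φ :=
            map_mono (restrictScalars_span_pair_le exists_sub_algebraMap_mem_mIdeal
              (h2 (Ideal.subset_span (by simp))) (h2 (Ideal.subset_span (by simp))))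
        _ = span ℂ {φ g, φ h} := by
            rw [Submodule.map_sup, ← ker_coeffsOn_belowDegree,
              LinearMap.le_ker_iff_map.mp le_rfl, sup_bot_eq, map_span, Set.image_pair]
    · rintro _ (rfl | rfl) <;> exact mem_map_of_mem (Ideal.subset_span (by simp))
  have hquot : Module.finrank ℂ ((belowDegree 3 → ℂ) ⧸ span ℂ {φ g, φ h}) = 5 := by
    refine Module.finrank_eq_of_rank_eq ?_
    rw [← hmap, ← rank_quotient_eq_rank_quotient_map (coeffsOn_surjective _)
      (by rwa [ker_coeffsOn_belowDegree]), (Quotient.restrictScalarsEquiv ℂ I).rank_eq, hrank]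
    rfl
  have hsum := Submodule.finrank_quotient_add_finrank (span ℂ {φ g, φ h})
  rw [hquot, Module.finrank_fintype_fun_eq_card, Fintype.card_coe] at hsum
  have hcard : (belowDegree 3).card = 6 := rfl
  omega

theorem not_pow_three_le_span_pair {g h : R2} (hg : g ∈ mIdeal ^ 2) (hg' : g ∉ mIdeal ^ 3)
    (hh : h ∈ mIdeal ^ 3) : ¬ mIdeal ^ 3 ≤ Ideal.span {g, h} := by
  classical
  intro hI
  refine not_restrictScalars_pow_le_span_sup {Xv * g, Yv * g, h} Finset.card_le_three ?_
  simpa using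
    restrictScalars_pow_succ_le_span_sup exists_sub_algebraMap_mem_mIdeal rfl hg hg' hh hI

/-- There is no ideal `I` of `R = ℂ⟦x,y⟧` generated by two elements with
`m³ ⊆ I ⊆ m²` and `dim_ℂ(R/I) = 5`. -/
theorem stmt4 :
    ¬ ∃ (I : Ideal R2) (g h : R2), I = Ideal.span {g, h} ∧
        mIdeal ^ 3 ≤ I ∧ I ≤ mIdeal ^ 2 ∧ Module.rank ℂ (R2 ⧸ I) = 5 := by
  rintro ⟨_, g, h, rfl, h3I, hI2, hrank⟩
  have hW := finrank_span_coeffsOn_pair_eq_one h3I hI2 hrank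
  set φ := coeffsOn (belowDegree 3)
  have hφ : ∀ f, φ f = 0 ↔ f ∈ mIdeal ^ 3 := fun f => by
    rw [← LinearMap.mem_ker, ker_coeffsOn_belowDegree, restrictScalars_mem]
  have hg : g ∈ mIdeal ^ 2 := hI2 (Ideal.subset_span (by simp))
  have hh : h ∈ mIdeal ^ 2 := hI2 (Ideal.subset_span (by simp))
  by_cases hg0 : φ g = 0
  · have hh0 : φ h ≠ 0 := by
      rintro hh0
      rw [hg0, hh0, Set.pair_eq_singleton, span_singleton_eq_bot.mpr rfl, finrank_bot] at hW
      exact zero_ne_one hW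
    refine not_pow_three_le_span_pair hh ((hφ h).not.mp hh0) ((hφ g).mp hg0) ?_
    rwa [Ideal.span_pair_comm]
  · obtain ⟨c, hc⟩ := exists_eq_smul_of_finrank_span_pair_eq_one hW hg0
    have hh' : h + g * algebraMap ℂ R2 (-c) ∈ mIdeal ^ 3 := by
      rw [← hφ, mul_comm, ← Algebra.smul_def, map_add, map_smul, hc, neg_smul, add_neg_cancel]
    refine not_pow_three_le_span_pair hg ((hφ g).not.mp hg0) hh' ?_
    rwa [Ideal.span_pair_add_left_mul]
end

section
/- Let R = ℂ⟦x,y⟧ with maximal ideal m = ⟨x,y⟩. If I is an ideal of R generated by two elements with x² ∈ I, xy ∈ I, y³ ∈ I and dim_ℂ(R/I) ≥ 3, then dim_ℂ(R/I) = 3 and there exist u, v ∈ R with ⟨u,v⟩ = m such that I = ⟨u, v³⟩. -/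
namespace MvPowerSeries

variable {σ : Type*}

theorem coeff_mul_eq_constantCoeff_mul {R : Type*} [Semiring R] {μ : σ →₀ ℕ}
    {g : MvPowerSeries σ R} (hg : ∀ ν < μ, coeff ν g = 0) (p : MvPowerSeries σ R) :
    coeff μ (p * g) = constantCoeff p * coeff μ g := by
  classical
  rw [coeff_mul, ← coeff_zero_eq_constantCoeff_apply]
  refine Finset.sum_eq_single (0, μ) (fun ⟨α, β⟩ hαβ hne => ?_) (by simp)
  rw [Finset.HasAntidiagonal.mem_antidiagonal] at hαβ
  dsimp only
  have hβ : β < μ := lt_of_le_of_ne (hαβ ▸ le_add_self) fun h => hne (by simp_all)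
  rw [hg β hβ, mul_zero]

theorem ne_span_of_card_lt {k ι : Type*} [Field k] [Fintype ι] {I : Ideal (MvPowerSeries σ k)}
    {μ : ι → σ →₀ ℕ} (hμ : Function.Injective μ) (hmem : ∀ i, monomial (μ i) 1 ∈ I)
    (hlow : ∀ i, ∀ f ∈ I, ∀ ν < μ i, coeff ν f = 0) (s : Finset (MvPowerSeries σ k))
    (hs : s.card < Fintype.card ι) : I ≠ Ideal.span s := by
  classical
  rintro rfl
  let φ : MvPowerSeries σ k →ₗ[k] ι → k := LinearMap.pi fun i => coeff (μ i)
  have hφ : ∀ f ∈ Ideal.span (s : Set (MvPowerSeries σ k)),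
      φ f ∈ Submodule.span k (s.image φ : Set (ι → k)) := by
    intro f hf
    induction hf using Submodule.span_induction with
    | mem f hf => exact Submodule.subset_span (Finset.mem_image_of_mem φ hf)
    | zero => simp
    | add f g _ _ hf hg => simpa using add_mem hf hg
    | smul p f hf ih =>
      have : φ (p * f) = constantCoeff p • φ f :=
        funext fun i => coeff_mul_eq_constantCoeff_mul (hlow i f hf) p
      rw [smul_eq_mul, this]
      exact Submodule.smul_mem _ _ ih
  have htop : Submodule.span k (s.image φ : Set (ι → k)) = ⊤ := by
    rw [eq_top_iff, ← (Pi.basisFun k ι).span_eq, Submodule.span_le]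
    rintro _ ⟨i, rfl⟩
    have : φ (monomial (μ i) 1) = Pi.basisFun k ι i := by
      ext j
      simp [φ, coeff_monomial, hμ.eq_iff, Pi.single_apply, eq_comm]
    exact this ▸ hφ _ (hmem i)
  have := finrank_span_finset_le_card (R := k) (s.image φ)
  rw [Set.finrank, htop, finrank_top, Module.finrank_fintype_fun_eq_card] at this
  exact absurd (this.trans Finset.card_image_le) hs.not_ge

end MvPowerSeries

section TwoVariables

open MvPowerSeries

noncomputable def bideg (a b : ℕ) : Fin 2 →₀ ℕ := Finsupp.single 0 a + Finsupp.single 1 b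

@[simp] theorem bideg_apply_zero (a b : ℕ) : bideg a b 0 = a := by simp [bideg]

@[simp] theorem bideg_apply_one (a b : ℕ) : bideg a b 1 = b := by simp [bideg]

theorem eq_bideg (ν : Fin 2 →₀ ℕ) : ν = bideg (ν 0) (ν 1) := by
  ext i; fin_cases i <;> simp

theorem bideg_inj {a b c d : ℕ} : bideg a b = bideg c d ↔ a = c ∧ b = d :=
  ⟨fun h => ⟨by simpa using congr($h 0), by simpa using congr($h 1)⟩, by rintro ⟨rfl, rfl⟩; rfl⟩

theorem bideg_le_bideg_iff {a b c d : ℕ} : bideg a b ≤ bideg c d ↔ a ≤ c ∧ b ≤ d := by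
  rw [Finsupp.le_def, Fin.forall_fin_two]
  simp

theorem bideg_add (a b c d : ℕ) : bideg a b + bideg c d = bideg (a + c) (b + d) := by
  ext i; fin_cases i <;> simp

theorem bideg_sub (a b c d : ℕ) : bideg a b - bideg c d = bideg (a - c) (b - d) := by
  ext i; fin_cases i <;> simp

theorem Xv_pow_mul_Yv_pow (a b : ℕ) : Xv ^ a * Yv ^ b = monomial (bideg a b) 1 := by
  rw [Xv, Yv, X_pow_eq, X_pow_eq, monomial_mul_monomial, one_mul, bideg]

noncomputable def idealJ : Ideal R2 := Ideal.span {Xv ^ 2, Xv * Yv, Yv ^ 3}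

theorem idealJ_le_iff {K : Ideal R2} : idealJ ≤ K ↔ Xv ^ 2 ∈ K ∧ Xv * Yv ∈ K ∧ Yv ^ 3 ∈ K := by
  simp [idealJ, Ideal.span_le, Set.insert_subset_iff]

noncomputable def lowPart (f : R2) : R2 :=
  coeff (bideg 0 0) f • 1 + coeff (bideg 1 0) f • Xv + coeff (bideg 0 1) f • Yv +
    coeff (bideg 0 2) f • Yv ^ 2

theorem sub_lowPart_mem_idealJ (f : R2) : f - lowPart f ∈ idealJ := by
  -- `A`, `B`, `C` collect the terms divisible by `x²`, the terms `x yᵇ` with `b ≥ 1`, and the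
  -- terms `yᵇ` with `b ≥ 3`
  let A : R2 := fun ν => coeff (ν + bideg 2 0) f
  let B : R2 := fun ν => if ν 0 = 0 then coeff (ν + bideg 1 1) f else 0
  let C : R2 := fun ν => if ν 0 = 0 then coeff (ν + bideg 0 3) f else 0
  have hsplit : f - lowPart f = Xv ^ 2 * A + Xv * Yv * B + Yv ^ 3 * C := by
    ext ν
    obtain ⟨p, q, rfl⟩ : ∃ p q, ν = bideg p q := ⟨_, _, eq_bideg ν⟩
    have h1 : (1 : R2) = monomial (bideg 0 0) 1 := by simpa using Xv_pow_mul_Yv_pow 0 0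
    have hX : Xv = monomial (bideg 1 0) 1 := by simpa using Xv_pow_mul_Yv_pow 1 0
    have hY : Yv = monomial (bideg 0 1) 1 := by simpa using Xv_pow_mul_Yv_pow 0 1
    have hX2 : Xv ^ 2 = monomial (bideg 2 0) 1 := by simpa using Xv_pow_mul_Yv_pow 2 0
    have hY2 : Yv ^ 2 = monomial (bideg 0 2) 1 := by simpa using Xv_pow_mul_Yv_pow 0 2
    have hY3 : Yv ^ 3 = monomial (bideg 0 3) 1 := by simpa using Xv_pow_mul_Yv_pow 0 3
    have hXY : Xv * Yv = monomial (bideg 1 1) 1 := by simpa using Xv_pow_mul_Yv_pow 1 1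
    rw [lowPart, h1, hX2, hY2, hY3, hXY, hX, hY]
    simp only [map_sub, map_add, coeff_smul, coeff_monomial, coeff_monomial_mul, bideg_inj]
    have hA : ∀ ν, coeff ν A = coeff (ν + bideg 2 0) f := fun _ => rfl
    have hB : ∀ ν, coeff ν B = if ν 0 = 0 then coeff (ν + bideg 1 1) f else 0 := fun _ => rfl
    have hC : ∀ ν, coeff ν C = if ν 0 = 0 then coeff (ν + bideg 0 3) f else 0 := fun _ => rfl
    simp only [bideg_le_bideg_iff, bideg_sub, hA, hB, hC, bideg_apply_zero, bideg_add, one_mul]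
    rcases p with _ | _ | p
    · rcases q with _ | _ | _ | q <;> simp
    · rcases q with _ | q <;> simp
    · simp
  rw [hsplit]
  refine add_mem (add_mem ?_ ?_) ?_ <;>
    exact Ideal.mul_mem_right _ _ (Ideal.subset_span (by simp))

theorem lowPart_mem {I : Ideal R2} (hJI : idealJ ≤ I) {f : R2} (hf : f ∈ I) : lowPart f ∈ I := by
  simpa using sub_mem hf (hJI (sub_lowPart_mem_idealJ f))

theorem smul_mem_iff_of_ne_zero {I : Ideal R2} {c : ℂ} (hc : c ≠ 0) {f : R2} :
    c • f ∈ I ↔ f ∈ I :=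
  Submodule.smul_mem_iff (I.restrictScalars ℂ) hc

theorem rank_quotient_le_card {K : Ideal R2} (hJK : idealJ ≤ K) (s : Finset R2)
    (hs : ∀ t ∈ ({1, Xv, Yv, Yv ^ 2} : Set R2), ∃ a ∈ s, ∃ c : ℂ, t - c • a ∈ K) :
    Module.rank ℂ (R2 ⧸ K) ≤ s.card := by
  set S := Submodule.span ℂ (Ideal.Quotient.mk K '' s)
  have hS : ∀ t ∈ ({1, Xv, Yv, Yv ^ 2} : Set R2), Ideal.Quotient.mk K t ∈ S := by
    intro t ht
    obtain ⟨a, ha, c, h⟩ := hs t ht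
    rw [Ideal.Quotient.eq.2 h, ← Ideal.Quotient.mkₐ_eq_mk ℂ, map_smul]
    exact Submodule.smul_mem _ _ (Submodule.subset_span (Set.mem_image_of_mem _ ha))
  simp only [Set.mem_insert_iff, Set.mem_singleton_iff, forall_eq_or_imp, forall_eq] at hS
  obtain ⟨h1, hx, hy, hy2⟩ := hS
  have htop : S = ⊤ := by
    refine Submodule.eq_top_iff'.2 fun z => ?_
    obtain ⟨f, rfl⟩ := Ideal.Quotient.mk_surjective z
    rw [← sub_add_cancel f (lowPart f), map_add,
      Ideal.Quotient.eq_zero_iff_mem.2 (hJK (sub_lowPart_mem_idealJ f)), zero_add]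
    simp only [lowPart, map_add, ← Ideal.Quotient.mkₐ_eq_mk ℂ, map_smul] at h1 hx hy hy2 ⊢
    exact add_mem (add_mem (add_mem (S.smul_mem _ h1) (S.smul_mem _ hx)) (S.smul_mem _ hy))
      (S.smul_mem _ hy2)
  calc Module.rank ℂ (R2 ⧸ K) = Module.rank ℂ S := by rw [htop, rank_top]
    _ ≤ Cardinal.mk (Ideal.Quotient.mk K '' s) := rank_span_le _
    _ ≤ s.card := Cardinal.mk_image_le.trans Cardinal.mk_coe_finset.le

theorem rank_quotient_le_two_of_coeff_Yv_ne_zero {I : Ideal R2} (hJI : idealJ ≤ I) {f : R2}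
    (hf : f ∈ I) (hf0 : coeff (bideg 0 0) f = 0) (hfy : coeff (bideg 0 1) f ≠ 0) :
    Module.rank ℂ (R2 ⧸ I) ≤ 2 := by
  classical
  set b := coeff (bideg 1 0) f
  set c := coeff (bideg 0 1) f
  set d := coeff (bideg 0 2) f
  obtain ⟨-, hxy, hy3⟩ := idealJ_le_iff.1 hJI
  have hlow : b • Xv + c • Yv + d • Yv ^ 2 ∈ I := by
    simpa [lowPart, hf0] using lowPart_mem hJI hf
  have hy2 : Yv ^ 2 ∈ I := by
    have : c • Yv ^ 2 = Yv * (b • Xv + c • Yv + d • Yv ^ 2) - b • (Xv * Yv) - d • Yv ^ 3 := by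
      simp only [Algebra.smul_def]; ring
    rw [← smul_mem_iff_of_ne_zero hfy, this]
    exact sub_mem (sub_mem (I.mul_mem_left _ hlow) (Submodule.smul_of_tower_mem _ _ hxy))
      (Submodule.smul_of_tower_mem _ _ hy3)
  have hlin : b • Xv + c • Yv ∈ I := by
    simpa using sub_mem hlow (Submodule.smul_of_tower_mem _ d hy2)
  refine (rank_quotient_le_card hJI {1, Xv} ?_).trans (by exact_mod_cast Finset.card_le_two)
  simp only [Set.mem_insert_iff, Set.mem_singleton_iff, forall_eq_or_imp, forall_eq]
  refine ⟨⟨1, by simp, 1, by simp⟩, ⟨Xv, by simp, 1, by simp⟩, ⟨Xv, by simp, -(c⁻¹ * b), ?_⟩,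
    ⟨1, by simp, 0, by simpa using hy2⟩⟩
  convert Submodule.smul_of_tower_mem _ c⁻¹ hlin using 1
  rw [smul_add, smul_smul, smul_smul, inv_mul_cancel₀ hfy, one_smul]
  module

theorem exists_Xv_add_smul_Yv_sq_mem {I : Ideal R2} (hJI : idealJ ≤ I) {f : R2} (hf : f ∈ I)
    (hf0 : coeff (bideg 0 0) f = 0) (hfy : coeff (bideg 0 1) f = 0)
    (hfx : coeff (bideg 1 0) f ≠ 0) : ∃ c : ℂ, Xv + c • Yv ^ 2 ∈ I := by
  refine ⟨(coeff (bideg 1 0) f)⁻¹ * coeff (bideg 0 2) f, ?_⟩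
  convert Submodule.smul_of_tower_mem _ (coeff (bideg 1 0) f)⁻¹ (lowPart_mem hJI hf) using 1
  simp only [lowPart, hf0, hfy, zero_smul, zero_add, add_zero, smul_add, smul_smul,
    inv_mul_cancel₀ hfx, one_smul]

theorem rank_quotient_le_three_of_Xv_add_smul_Yv_sq_mem {I : Ideal R2} (hJI : idealJ ≤ I)
    {c : ℂ} (hu : Xv + c • Yv ^ 2 ∈ I) : Module.rank ℂ (R2 ⧸ I) ≤ 3 := by
  classical
  refine (rank_quotient_le_card hJI {1, Yv, Yv ^ 2} ?_).trans
    (by exact_mod_cast Finset.card_le_three)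
  simp only [Set.mem_insert_iff, Set.mem_singleton_iff, forall_eq_or_imp, forall_eq]
  refine ⟨⟨1, by simp, 1, by simp⟩, ⟨Yv ^ 2, by simp, -c, by simpa using hu⟩,
    ⟨Yv, by simp, 1, by simp⟩, ⟨Yv ^ 2, by simp, 1, by simp⟩⟩

theorem rank_quotient_le_two_of_Yv_sq_mem {I : Ideal R2} (hJI : idealJ ≤ I)
    {c : ℂ} (hu : Xv + c • Yv ^ 2 ∈ I) (hy2 : Yv ^ 2 ∈ I) : Module.rank ℂ (R2 ⧸ I) ≤ 2 := by
  classical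
  refine (rank_quotient_le_card hJI {1, Yv} ?_).trans (by exact_mod_cast Finset.card_le_two)
  simp only [Set.mem_insert_iff, Set.mem_singleton_iff, forall_eq_or_imp, forall_eq]
  refine ⟨⟨1, by simp, 1, by simp⟩, ⟨1, by simp, 0, ?_⟩, ⟨Yv, by simp, 1, by simp⟩,
    ⟨1, by simp, 0, by simpa using hy2⟩⟩
  simpa using sub_mem hu (Submodule.smul_of_tower_mem _ c hy2)

theorem span_Xv_add_smul_Yv_sq_Yv (c : ℂ) : Ideal.span {Xv + c • Yv ^ 2, Yv} = mIdeal := by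
  have := Ideal.span_pair_add_mul_right (x := Xv) (y := Yv) (c • Yv)
  rwa [smul_mul_assoc, ← sq] at this

theorem idealJ_le_span_Xv_add_smul_Yv_sq_Yv_pow_three (c : ℂ) :
    idealJ ≤ Ideal.span {Xv + c • Yv ^ 2, Yv ^ 3} := by
  have hu : Xv + c • Yv ^ 2 ∈ Ideal.span {Xv + c • Yv ^ 2, Yv ^ 3} := Ideal.subset_span (by simp)
  have hy3 : Yv ^ 3 ∈ Ideal.span {Xv + c • Yv ^ 2, Yv ^ 3} := Ideal.subset_span (by simp)
  refine idealJ_le_iff.2 ⟨?_, ?_, hy3⟩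
  · have : Xv ^ 2 = (Xv - c • Yv ^ 2) * (Xv + c • Yv ^ 2) + (c ^ 2 • Yv) * Yv ^ 3 := by
      simp only [Algebra.smul_def, map_pow]; ring
    rw [this]
    exact add_mem (Ideal.mul_mem_left _ _ hu) (Ideal.mul_mem_left _ _ hy3)
  · have : Xv * Yv = Yv * (Xv + c • Yv ^ 2) - c • Yv ^ 3 := by
      simp only [Algebra.smul_def]; ring
    rw [this]
    exact sub_mem (Ideal.mul_mem_left _ _ hu) (Submodule.smul_of_tower_mem _ c hy3)

theorem eq_span_Xv_add_smul_Yv_sq_Yv_pow_three {I : Ideal R2} (hJI : idealJ ≤ I) {c : ℂ}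
    (hu : Xv + c • Yv ^ 2 ∈ I) (hy2 : Yv ^ 2 ∉ I) (h0 : ∀ f ∈ I, coeff (bideg 0 0) f = 0)
    (hy : ∀ f ∈ I, coeff (bideg 0 1) f = 0) : I = Ideal.span {Xv + c • Yv ^ 2, Yv ^ 3} := by
  refine le_antisymm (fun f hf => ?_) (Ideal.span_le.2 ?_)
  · set b := coeff (bideg 1 0) f
    set d := coeff (bideg 0 2) f
    have hlow : lowPart f = b • (Xv + c • Yv ^ 2) + (d - b * c) • Yv ^ 2 := by
      simp only [lowPart, h0 f hf, hy f hf, zero_smul, zero_add, add_zero]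
      module
    have hd : d - b * c = 0 := by
      by_contra hne
      refine hy2 ((smul_mem_iff_of_ne_zero hne).1 ?_)
      simpa [hlow] using sub_mem (lowPart_mem hJI hf) (Submodule.smul_of_tower_mem _ b hu)
    rw [← sub_add_cancel f (lowPart f)]
    refine add_mem (idealJ_le_span_Xv_add_smul_Yv_sq_Yv_pow_three c (sub_lowPart_mem_idealJ f)) ?_
    rw [hlow, hd, zero_smul, add_zero]
    exact Submodule.smul_of_tower_mem _ b (Ideal.subset_span (by simp))
  · simp [Set.insert_subset_iff, hu, (idealJ_le_iff.1 hJI).2.2]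

theorem ne_span_pair_of_Yv_pow_mem {I : Ideal R2} (k : ℕ) (hx2 : Xv ^ 2 ∈ I)
    (hxy : Xv * Yv ∈ I) (hyk : Yv ^ k ∈ I)
    (hlow : ∀ f ∈ I, ∀ a b : ℕ, a + b ≤ 1 ∨ (a = 0 ∧ b < k) → coeff (bideg a b) f = 0)
    (g h : R2) : I ≠ Ideal.span {g, h} := by
  classical
  rw [← Finset.coe_pair]
  refine MvPowerSeries.ne_span_of_card_lt (μ := ![bideg 2 0, bideg 1 1, bideg 0 k]) ?_ ?_ ?_ _
    (Finset.card_le_two.trans_lt (by simp))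
  · intro i j
    fin_cases i <;> fin_cases j <;> simp [bideg_inj]
  · intro i
    fin_cases i <;> simpa [← Xv_pow_mul_Yv_pow]
  · intro i f hf ν hν
    rw [eq_bideg ν] at hν ⊢
    refine hlow f hf _ _ ?_
    fin_cases i <;> simp [lt_iff_le_and_ne, bideg_le_bideg_iff, bideg_inj] at hν <;> omega

theorem ne_span_pair_of_coeff_linear_eq_zero {I : Ideal R2} (hJI : idealJ ≤ I)
    (h0 : ∀ f ∈ I, coeff (bideg 0 0) f = 0) (hx : ∀ f ∈ I, coeff (bideg 1 0) f = 0)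
    (hy : ∀ f ∈ I, coeff (bideg 0 1) f = 0) (g h : R2) : I ≠ Ideal.span {g, h} := by
  obtain ⟨hx2, hxy, hy3⟩ := idealJ_le_iff.1 hJI
  have hlin : ∀ f ∈ I, ∀ a b : ℕ, a + b ≤ 1 → coeff (bideg a b) f = 0 := by
    intro f hf a b hab
    obtain ⟨rfl, rfl⟩ | ⟨rfl, rfl⟩ | ⟨rfl, rfl⟩ :
        (a = 0 ∧ b = 0) ∨ (a = 1 ∧ b = 0) ∨ (a = 0 ∧ b = 1) := by omega
    exacts [h0 f hf, hx f hf, hy f hf]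
  by_cases hy2 : ∃ f ∈ I, coeff (bideg 0 2) f ≠ 0
  · -- here `I = m²`, minimally generated by `x², xy, y²`
    obtain ⟨f, hf, hd⟩ := hy2
    have hy2 : Yv ^ 2 ∈ I := by
      rw [← smul_mem_iff_of_ne_zero hd]
      simpa [lowPart, h0 f hf, hx f hf, hy f hf] using lowPart_mem hJI hf
    exact ne_span_pair_of_Yv_pow_mem 2 hx2 hxy hy2
      (fun f hf a b hab => hlin f hf a b (by omega)) g h
  · -- here `I = J`
    push Not at hy2
    refine ne_span_pair_of_Yv_pow_mem 3 hx2 hxy hy3 (fun f hf a b hab => ?_) g h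
    obtain hab | ⟨rfl, hb⟩ := hab
    · exact hlin f hf a b hab
    · interval_cases b
      exacts [hlin f hf 0 0 (by omega), hlin f hf 0 1 (by omega), hy2 f hf]

theorem coeff_bideg_zero_zero_eq_zero {I : Ideal R2} (hI : I ≠ ⊤) {f : R2} (hf : f ∈ I) :
    coeff (bideg 0 0) f = 0 := by
  by_contra h
  refine hI (Ideal.eq_top_of_isUnit_mem _ hf (isUnit_iff_constantCoeff.2 ?_))
  rw [show bideg 0 0 = 0 by simp [bideg], coeff_zero_eq_constantCoeff_apply] at h
  exact isUnit_iff_ne_zero.2 h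

end TwoVariables

/-- If `I` is an ideal of `R = ℂ⟦x,y⟧` generated by two elements with
`x² ∈ I`, `xy ∈ I`, `y³ ∈ I` and `dim_ℂ(R/I) ≥ 3`, then `dim_ℂ(R/I) = 3`
and there is a regular system of parameters `u, v` with `I = ⟨u, v³⟩`. -/
theorem stmt6 (I : Ideal R2) (hgen : ∃ g h : R2, I = Ideal.span {g, h})
    (hx2 : Xv ^ 2 ∈ I) (hxy : Xv * Yv ∈ I) (hy3 : Yv ^ 3 ∈ I)
    (hdim : (3 : Cardinal) ≤ Module.rank ℂ (R2 ⧸ I)) :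
    Module.rank ℂ (R2 ⧸ I) = 3 ∧
    ∃ u v : R2, Ideal.span {u, v} = mIdeal ∧ I = Ideal.span {u, v ^ 3} := by
  obtain ⟨g, h, hI⟩ := hgen
  have hJI : idealJ ≤ I := idealJ_le_iff.2 ⟨hx2, hxy, hy3⟩
  have hnot_le_two : ¬ Module.rank ℂ (R2 ⧸ I) ≤ 2 := fun h2 => by
    have := hdim.trans h2
    norm_num at this
  have hI_ne_top : I ≠ ⊤ := by
    rintro rfl
    simp at hdim
  have h0 : ∀ f ∈ I, MvPowerSeries.coeff (bideg 0 0) f = 0 := fun _ =>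
    coeff_bideg_zero_zero_eq_zero hI_ne_top
  have hy : ∀ f ∈ I, MvPowerSeries.coeff (bideg 0 1) f = 0 := fun f hf => by_contra fun hfy =>
    hnot_le_two (rank_quotient_le_two_of_coeff_Yv_ne_zero hJI hf (h0 f hf) hfy)
  by_cases hx : ∃ f ∈ I, MvPowerSeries.coeff (bideg 1 0) f ≠ 0
  · obtain ⟨f, hf, hfx⟩ := hx
    obtain ⟨c, hu⟩ := exists_Xv_add_smul_Yv_sq_mem hJI hf (h0 f hf) (hy f hf) hfx
    have hy2 : Yv ^ 2 ∉ I := fun hy2 => hnot_le_two (rank_quotient_le_two_of_Yv_sq_mem hJI hu hy2)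
    exact ⟨le_antisymm (rank_quotient_le_three_of_Xv_add_smul_Yv_sq_mem hJI hu) hdim,
      _, Yv, span_Xv_add_smul_Yv_sq_Yv c, eq_span_Xv_add_smul_Yv_sq_Yv_pow_three hJI hu hy2 h0 hy⟩
  · push Not at hx
    exact absurd hI (ne_span_pair_of_coeff_linear_eq_zero hJI h0 hx hy g h)
end
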